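/- (Weighted Dirichlet-form identity.) Let θ₀(y) = (1/2)(1 − tanh(y/(2√2))) and W(ρ) = (1/4)ρ²(1−ρ)². Then for every continuously differentiable function v : ℝ → ℝ such that v and v' are bounded, one has ∫_ℝ ((θ₀'(y) v(y))')² dy = ∫_ℝ (θ₀'(y))² (v'(y))² dy − ∫_ℝ W''(θ₀(y)) (θ₀'(y))² v(y)² dy. -/

import Mathlib

/-!
`φ := θ₀'` solves the linearized equation `φ'' = W''(θ₀) φ` (differentiate `θ₀'' = W'(θ₀)`).
For any `φ` with `φ'' = q φ`, expanding the square gives the ground-state substitution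
`((φ v)')² = φ² v'² - q φ² v² + (φ φ' v²)'`, and the last term integrates to zero because
`φ φ' v²` and its derivative are integrable as soon as `φ, φ', q φ ∈ L²` and `v, v'` are bounded.
For the kink, `θ₀'`, `θ₀''` and `W''(θ₀) θ₀'` are all dominated by `1 - tanh² (y / 2√2)`,
which is integrable since `cosh² x ≥ 1 + x²`.
-/

open Real MeasureTheory

/-- The double-well potential `W(ρ) = (1/4) ρ² (1-ρ)²`. -/
noncomputable def W (ρ : ℝ) : ℝ := (1/4) * ρ^2 * (1 - ρ)^2

/-- The standing-wave profile `θ₀(y) = (1/2)(1 - tanh(y/(2√2)))`. -/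
noncomputable def theta0 (y : ℝ) : ℝ := (1/2) * (1 - Real.tanh (y / (2 * Real.sqrt 2)))

theorem integral_sq_deriv_mul_eq_sub_of_hasDerivAt {φ φ' q v : ℝ → ℝ}
    (hφ : ∀ x, HasDerivAt φ (φ' x) x) (hφ' : ∀ x, HasDerivAt φ' (q x * φ x) x)
    (hφL : MemLp φ 2) (hφ'L : MemLp φ' 2) (hqφL : MemLp (fun x => q x * φ x) 2)
    (hv : Differentiable ℝ v) (hvb : ∃ M : ℝ, ∀ x, |v x| ≤ M ∧ |deriv v x| ≤ M) :
    ∫ x, (deriv (fun z => φ z * v z) x) ^ 2 =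
      (∫ x, φ x ^ 2 * deriv v x ^ 2) - ∫ x, q x * φ x ^ 2 * v x ^ 2 := by
  obtain ⟨M, hM⟩ := hvb
  have mul_v {f : ℝ → ℝ} (hf : MemLp f 2) : MemLp (fun x => f x * v x) 2 :=
    hf.of_le_mul (c := M) (hf.1.mul hv.continuous.aestronglyMeasurable)
      (ae_of_all _ fun x => by rw [norm_mul, mul_comm]; gcongr; exact (hM x).1)
  have mul_v' {f : ℝ → ℝ} (hf : MemLp f 2) : MemLp (fun x => f x * deriv v x) 2 :=
    hf.of_le_mul (c := M) (hf.1.mul (measurable_deriv v).aestronglyMeasurable)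
      (ae_of_all _ fun x => by rw [norm_mul, mul_comm]; gcongr; exact (hM x).2)
  have hφv x : HasDerivAt (fun z => φ z * v z) (φ' x * v x + φ x * deriv v x) x :=
    (hφ x).mul (hv x).hasDerivAt
  have hφ'v x : HasDerivAt (fun z => φ' z * v z) (q x * φ x * v x + φ' x * deriv v x) x :=
    (hφ' x).mul (hv x).hasDerivAt
  set L := fun x => (φ' x * v x + φ x * deriv v x) ^ 2
  set R₁ := fun x => (φ x * deriv v x) ^ 2
  set R₂ := fun x => q x * φ x * v x * (φ x * v x)
  have hG x : HasDerivAt (fun z => φ z * v z * (φ' z * v z)) ((L - R₁ + R₂) x) x :=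
    ((hφv x).mul (hφ'v x)).congr_deriv (by simp only [L, R₁, R₂, Pi.add_apply, Pi.sub_apply]; ring)
  have hL : Integrable L := ((mul_v hφ'L).add (mul_v' hφL)).integrable_sq
  have hR₁ : Integrable R₁ := (mul_v' hφL).integrable_sq
  have hR₂ : Integrable R₂ := (mul_v hqφL).integrable_mul (mul_v hφL)
  have h0 := integral_eq_zero_of_hasDerivAt_of_integrable hG ((hL.sub hR₁).add hR₂)
    ((mul_v hφL).integrable_mul (mul_v hφ'L))
  rw [integral_add' (hL.sub hR₁) hR₂, integral_sub' hL hR₁] at h0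
  have hderiv : (fun x => deriv (fun z => φ z * v z) x ^ 2) = L :=
    funext fun x => by rw [(hφv x).deriv]
  have hR₂_eq x : R₂ x = q x * φ x ^ 2 * v x ^ 2 := by ring
  simp only [hderiv, hR₂_eq] at h0 ⊢
  simp only [R₁, mul_pow] at h0
  linarith

namespace Real

lemma one_sub_tanh_sq (x : ℝ) : 1 - tanh x ^ 2 = (cosh x ^ 2)⁻¹ := by
  have := cosh_pos x
  rw [tanh_eq_sinh_div_cosh, div_pow, cosh_sq']
  field_simp
  ring

lemma hasDerivAt_tanh (x : ℝ) : HasDerivAt tanh (1 - tanh x ^ 2) x := by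
  have h : HasDerivAt (fun y => sinh y / cosh y) _ x :=
    (hasDerivAt_sinh x).div (hasDerivAt_cosh x) (cosh_pos x).ne'
  refine (h.congr_deriv ?_).congr_of_eventuallyEq (.of_forall tanh_eq_sinh_div_cosh)
  rw [one_sub_tanh_sq]
  field_simp
  exact cosh_sq_sub_sinh_sq x

lemma hasDerivAt_tanh_div (c y : ℝ) :
    HasDerivAt (fun y => tanh (y / c)) ((1 - tanh (y / c) ^ 2) / c) y := by
  have h := (hasDerivAt_tanh (y / c)).comp y ((hasDerivAt_id' y).div_const c)
  rwa [mul_one_div] at h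

@[fun_prop]
lemma continuous_tanh : Continuous tanh :=
  continuous_iff_continuousAt.2 fun x => (hasDerivAt_tanh x).continuousAt

lemma one_sub_tanh_sq_le_inv_one_add_sq (x : ℝ) : 1 - tanh x ^ 2 ≤ (1 + x ^ 2)⁻¹ := by
  have hx : x ^ 2 ≤ sinh x ^ 2 := by
    rcases le_total 0 x with h | h
    · nlinarith [self_le_sinh_iff.2 h]
    · nlinarith [sinh_le_self_iff.2 h]
  rw [one_sub_tanh_sq, cosh_sq']
  gcongr

lemma integrable_one_sub_tanh_sq : Integrable fun x => 1 - tanh x ^ 2 :=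
  integrable_inv_one_add_sq.mono' (by fun_prop) (ae_of_all _ fun x => by
    rw [norm_of_nonneg (by linarith [tanh_sq_lt_one x])]
    exact one_sub_tanh_sq_le_inv_one_add_sq x)

lemma memLp_one_sub_tanh_sq_div {c : ℝ} (hc : c ≠ 0) :
    MemLp (fun y => 1 - tanh (y / c) ^ 2) 2 := by
  refine (memLp_two_iff_integrable_sq (by fun_prop)).2
    ((integrable_one_sub_tanh_sq.comp_div hc).mono' (by fun_prop) (ae_of_all _ fun y => ?_))
  have := tanh_sq_lt_one (y / c)
  rw [norm_of_nonneg (by positivity)]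
  nlinarith [sq_nonneg (tanh (y / c))]

lemma memLp_of_abs_le_one_sub_tanh_sq {f : ℝ → ℝ} {c : ℝ} (hc : c ≠ 0) (hf : Continuous f)
    (h : ∀ y, |f y| ≤ 1 - tanh (y / c) ^ 2) : MemLp f 2 :=
  (memLp_one_sub_tanh_sq_div hc).of_le hf.aestronglyMeasurable
    (ae_of_all _ fun y => (h y).trans (le_abs_self _))

end Real

lemma hasDerivAt_W (ρ : ℝ) : HasDerivAt W (ρ ^ 3 - 3 / 2 * ρ ^ 2 + ρ / 2) ρ := by
  have h : HasDerivAt (fun x => (1 / 4) * x ^ 2 * (1 - x) ^ 2) _ ρ :=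
    ((hasDerivAt_pow 2 ρ).const_mul _).mul (((hasDerivAt_id' ρ).const_sub 1).pow 2)
  exact h.congr_deriv (by push_cast; ring)

lemma deriv_deriv_W (ρ : ℝ) : deriv (deriv W) ρ = 3 * ρ ^ 2 - 3 * ρ + 1 / 2 := by
  have h : HasDerivAt (fun x => x ^ 3 - 3 / 2 * x ^ 2 + x / 2) _ ρ :=
    ((hasDerivAt_pow 3 ρ).sub ((hasDerivAt_pow 2 ρ).const_mul _)).add
      ((hasDerivAt_id' ρ).div_const 2)
  rw [funext fun ρ => (hasDerivAt_W ρ).deriv, h.deriv]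
  push_cast
  ring

noncomputable def theta0' (y : ℝ) : ℝ := -(1 - tanh (y / (2 * √2)) ^ 2) / (4 * √2)

noncomputable def theta0'' (y : ℝ) : ℝ :=
  tanh (y / (2 * √2)) * (1 - tanh (y / (2 * √2)) ^ 2) / 8

lemma hasDerivAt_theta0 (y : ℝ) : HasDerivAt theta0 (theta0' y) y := by
  have h : HasDerivAt theta0 _ y := ((hasDerivAt_tanh_div _ y).const_sub 1).const_mul (1 / 2)
  exact h.congr_deriv (by rw [theta0']; ring)

lemma hasDerivAt_theta0' (y : ℝ) : HasDerivAt theta0' (theta0'' y) y := by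
  have h : HasDerivAt theta0' _ y :=
    (((hasDerivAt_tanh_div _ y).pow 2).const_sub 1).neg.div_const _
  refine h.congr_deriv ?_
  rw [theta0'']
  field_simp
  simp only [sq_sqrt zero_le_two]
  push_cast
  ring

lemma hasDerivAt_theta0'' (y : ℝ) :
    HasDerivAt theta0'' (deriv (deriv W) (theta0 y) * theta0' y) y := by
  have hT := hasDerivAt_tanh_div (2 * √2) y
  have h : HasDerivAt theta0'' _ y := (hT.mul ((hT.pow 2).const_sub 1)).div_const 8
  refine h.congr_deriv ?_
  rw [deriv_deriv_W, theta0, theta0']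
  field_simp
  simp only [Pi.pow_apply]
  push_cast
  ring

lemma abs_theta0'_le (y : ℝ) : |theta0' y| ≤ 1 - tanh (y / (2 * √2)) ^ 2 := by
  have hs : 0 < 1 - tanh (y / (2 * √2)) ^ 2 := by linarith [tanh_sq_lt_one (y / (2 * √2))]
  have : 1 ≤ √2 := by simp [one_le_sqrt]
  rw [theta0', abs_div, abs_neg, abs_of_pos hs, abs_of_pos (by positivity)]
  exact div_le_self hs.le (by linarith)

lemma abs_theta0''_le (y : ℝ) : |theta0'' y| ≤ 1 - tanh (y / (2 * √2)) ^ 2 := by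
  have hs : 0 < 1 - tanh (y / (2 * √2)) ^ 2 := by linarith [tanh_sq_lt_one (y / (2 * √2))]
  have hT := abs_tanh_lt_one (y / (2 * √2))
  rw [theta0'', abs_div, abs_mul, abs_of_pos hs, abs_of_pos (by norm_num : (0:ℝ) < 8)]
  nlinarith

lemma abs_deriv_deriv_W_theta0_le (y : ℝ) : |deriv (deriv W) (theta0 y)| ≤ 1 := by
  have hT := tanh_sq_lt_one (y / (2 * √2))
  rw [deriv_deriv_W, theta0, abs_le]
  constructor <;> nlinarith [sq_nonneg (tanh (y / (2 * √2)))]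

lemma memLp_theta0' : MemLp theta0' 2 :=
  memLp_of_abs_le_one_sub_tanh_sq (by positivity) (by unfold theta0'; fun_prop) abs_theta0'_le

lemma memLp_theta0'' : MemLp theta0'' 2 :=
  memLp_of_abs_le_one_sub_tanh_sq (by positivity) (by unfold theta0''; fun_prop) abs_theta0''_le

lemma memLp_deriv_deriv_W_theta0_mul_theta0' :
    MemLp (fun y => deriv (deriv W) (theta0 y) * theta0' y) 2 := by
  refine memLp_of_abs_le_one_sub_tanh_sq (c := 2 * √2) (by positivity)
    (by simp only [deriv_deriv_W]; unfold theta0 theta0'; fun_prop) fun y => ?_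
  rw [abs_mul]
  exact (mul_le_of_le_one_left (abs_nonneg _) (abs_deriv_deriv_W_theta0_le y)).trans
    (abs_theta0'_le y)

theorem weighted_dirichlet_form_identity
    (v : ℝ → ℝ) (hv : ContDiff ℝ 1 v)
    (hvb : ∃ M : ℝ, ∀ y : ℝ, |v y| ≤ M ∧ |deriv v y| ≤ M) :
    ∫ y : ℝ, (deriv (fun z => deriv theta0 z * v z) y)^2 =
      (∫ y : ℝ, (deriv theta0 y)^2 * (deriv v y)^2)
        - ∫ y : ℝ, deriv (deriv W) (theta0 y) * (deriv theta0 y)^2 * (v y)^2 := by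
  rw [show deriv theta0 = theta0' from funext fun y => (hasDerivAt_theta0 y).deriv]
  exact integral_sq_deriv_mul_eq_sub_of_hasDerivAt hasDerivAt_theta0' hasDerivAt_theta0''
    memLp_theta0' memLp_theta0'' memLp_deriv_deriv_W_theta0_mul_theta0'
    (hv.differentiable one_ne_zero) hvb
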